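/- Let m ≥ 2 and define x_k = sin²((2k-1)π/(4m)) for k = 1,…,m, and set α(x) = ∑_{k=1}^m ∏_{j≠k} |x_j/(x_j - x_k)|. Then α(x) ≤ 3 log(m). -/

import Mathlib

/-!
Write `θ_k = (2k-1)π/(4m)`, so `x_k = sin² θ_k = (1 - y_k)/2` where `y_k = cos 2θ_k` are the
roots of the Chebyshev polynomial `T_m = 2^(m-1) ∏ (X - y_j)`. Then
`x_j / (x_j - x_k) = (1 - y_j)/(y_k - y_j)`, and the product over `j ≠ k` is a Lagrange basis
value: `(1 - y_k) ∏_{j≠k} (1 - y_j)/(y_k - y_j) = T_m(1) / T_m'(y_k)`. Since `T_m(1) = 1` and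
`|T_m'(cos φ)| |sin φ| = m |sin mφ| = m` at a root, the `k`-th term is exactly `cot θ_k / m`.
Finally `cot θ < 1/θ` bounds the sum by `(4/π) ∑ 1/(2k-1) ≤ (4/π)(1 + log(2m-1)/2) ≤ 3 log m`.
-/

/-- The Chebyshev nodes `x_k = sin²((2k-1)π/(4m))`. -/
noncomputable def chebNode (m k : ℕ) : ℝ :=
  Real.sin ((2 * (k : ℝ) - 1) * Real.pi / (4 * m)) ^ 2

open Polynomial Lagrange Finset Real

theorem Lagrange.sub_mul_prod_erase_div_eq_eval_div_eval_derivative {F ι : Type*} [Field F]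
    [DecidableEq ι] {s : Finset ι} (v : ι → F) {i : ι} (hi : i ∈ s) {p : F[X]} {a : F}
    (ha : a ≠ 0) (hp : p = C a * nodal s v) (x : F) :
    (x - v i) * ∏ j ∈ s.erase i, (x - v j) / (v i - v j) =
      p.eval x / (derivative p).eval (v i) := by
  rw [hp, derivative_C_mul, eval_mul, eval_mul, eval_C, eval_C, mul_div_mul_left _ _ ha,
    eval_nodal_derivative_eval_node_eq hi, eval_nodal, eval_nodal, prod_div_distrib,
    ← mul_div_assoc, mul_prod_erase s (fun j => x - v j) hi]

theorem cos_div_sin_lt_inv {θ : ℝ} (h0 : 0 < θ) (h1 : θ < π / 2) : cos θ / sin θ < θ⁻¹ := by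
  have htan := lt_tan h0 h1
  rw [tan_eq_sin_div_cos] at htan
  rw [← inv_div]
  exact (inv_lt_inv₀ (h0.trans htan) h0).mpr htan

noncomputable def chebAngle (m k : ℕ) : ℝ := (2 * k - 1) * π / (4 * m)

/-- The roots of `T_m`, indexed from `1`. -/
noncomputable def chebRoot (m k : ℕ) : ℝ := cos (2 * chebAngle m k)

theorem chebAngle_mem_Ioo {m k : ℕ} (hk : k ∈ Icc 1 m) : chebAngle m k ∈ Set.Ioo 0 (π / 2) := by
  rw [mem_Icc] at hk
  have hk1 : (1 : ℝ) ≤ k := by exact_mod_cast hk.1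
  have hkm : (k : ℝ) ≤ m := by exact_mod_cast hk.2
  constructor
  · exact div_pos (mul_pos (by linarith) pi_pos) (by linarith)
  · rw [chebAngle, div_lt_iff₀ (by linarith)]
    nlinarith [pi_pos]

theorem chebNode_eq_one_sub_chebRoot_div_two (m k : ℕ) :
    chebNode m k = (1 - chebRoot m k) / 2 := by
  rw [chebNode, chebRoot, sin_sq_eq_half_sub, chebAngle]
  ring

theorem T_real_eq_C_mul_nodal_chebRoot (m : ℕ) :
    Chebyshev.T ℝ m = C (2 ^ (m - 1)) * nodal (Icc 1 m) (chebRoot m) := by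
  have hinj := (range m).nodup_map_iff_injOn.mp (Chebyshev.roots_T_real_nodup m)
  have hcard : (Chebyshev.T ℝ m).roots.card = (Chebyshev.T ℝ m).natDegree := by
    rw [Chebyshev.roots_T_real, Chebyshev.natDegree_T, Finset.card_val, card_image_of_injOn hinj,
      card_range, Int.natAbs_natCast]
  conv_lhs => rw [← C_leadingCoeff_mul_prod_multiset_X_sub_C hcard]
  rw [Chebyshev.leadingCoeff_T, Int.natAbs_natCast, Chebyshev.roots_T_real,
    ← Finset.prod_eq_multiset_prod, prod_image hinj, nodal, ← Finset.Ico_add_one_right_eq_Icc,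
    prod_Ico_eq_prod_range]
  refine congrArg _ (prod_congr (by simp) fun k _ => ?_)
  simp only [chebRoot, chebAngle]
  push_cast
  ring_nf

theorem abs_eval_derivative_T_chebRoot_mul_abs_sin {m : ℕ} (hm : m ≠ 0) (k : ℕ) :
    |(derivative (Chebyshev.T ℝ m)).eval (chebRoot m k)| * |sin (2 * chebAngle m k)| = m := by
  set φ := 2 * chebAngle m k
  have hcos : cos (m * φ) = 0 :=
    cos_eq_zero_iff.mpr ⟨k - 1, by simp only [φ, chebAngle]; push_cast; field_simp; ring⟩
  have hsin : |sin (m * φ)| = 1 := by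
    rw [← sq_eq_sq₀ (abs_nonneg _) zero_le_one, sq_abs, sin_sq, hcos]
    norm_num
  have hU := Chebyshev.U_real_cos φ (m - 1)
  rw [Int.cast_sub, Int.cast_natCast, Int.cast_one, sub_add_cancel] at hU
  rw [Chebyshev.T_derivative_eq_U, eval_mul, eval_intCast, Int.cast_natCast, chebRoot, abs_mul,
    mul_assoc, ← abs_mul, hU, hsin, Nat.abs_cast, mul_one]

theorem prod_abs_chebNode_div_sub_chebNode {m k : ℕ} (hk : k ∈ Icc 1 m) :
    ∏ j ∈ (Icc 1 m).erase k, |chebNode m j / (chebNode m j - chebNode m k)| =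
      cos (chebAngle m k) / (m * sin (chebAngle m k)) := by
  have hm : m ≠ 0 := by rw [mem_Icc] at hk; omega
  obtain ⟨hθ0, hθ1⟩ := chebAngle_mem_Ioo hk
  have hsin : 0 < sin (chebAngle m k) := sin_pos_of_pos_of_lt_pi hθ0 (by linarith [pi_pos])
  have hcos : 0 < cos (chebAngle m k) := cos_pos_of_mem_Ioo ⟨by linarith, hθ1⟩
  have hfactor : ∀ j, chebNode m j / (chebNode m j - chebNode m k) =
      (1 - chebRoot m j) / (chebRoot m k - chebRoot m j) := fun j => by
    rw [chebNode_eq_one_sub_chebRoot_div_two, chebNode_eq_one_sub_chebRoot_div_two,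
      ← sub_div, div_div_div_cancel_right₀ two_ne_zero]
    ring_nf
  have hlagrange := Lagrange.sub_mul_prod_erase_div_eq_eval_div_eval_derivative (chebRoot m) hk
    (by positivity) (T_real_eq_C_mul_nodal_chebRoot m) 1
  rw [Chebyshev.T_eval_one] at hlagrange
  have hroot : 1 - chebRoot m k = 2 * sin (chebAngle m k) ^ 2 := by
    rw [chebRoot, cos_two_mul, cos_sq']
    ring
  have hderiv := abs_eval_derivative_T_chebRoot_mul_abs_sin hm k
  rw [sin_two_mul, abs_of_pos (by positivity : 0 < 2 * sin (chebAngle m k) * cos (chebAngle m k))]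
    at hderiv
  have habs := congrArg abs hlagrange
  rw [abs_mul, abs_div, abs_one, hroot, abs_of_pos (by positivity),
    eq_div_of_mul_eq (by positivity) hderiv] at habs
  simp_rw [hfactor, ← abs_prod]
  field_simp at habs ⊢
  linarith

theorem cos_chebAngle_div_mul_sin_lt {m k : ℕ} (hk : k ∈ Icc 1 m) :
    cos (chebAngle m k) / (m * sin (chebAngle m k)) < 4 / π * (1 / (2 * (k : ℝ) - 1)) := by
  obtain ⟨hθ0, hθ1⟩ := chebAngle_mem_Ioo hk
  have hm : (0 : ℝ) < m := by rw [mem_Icc] at hk; exact_mod_cast (by omega : 0 < m)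
  have hk1 : (0 : ℝ) < 2 * k - 1 := by
    rw [mem_Icc] at hk; linarith [(by exact_mod_cast hk.1 : (1 : ℝ) ≤ k)]
  calc cos (chebAngle m k) / (m * sin (chebAngle m k))
      = cos (chebAngle m k) / sin (chebAngle m k) / m := by rw [div_div, mul_comm]
    _ < (chebAngle m k)⁻¹ / m := div_lt_div_of_pos_right (cos_div_sin_lt_inv hθ0 hθ1) hm
    _ = 4 / π * (1 / (2 * (k : ℝ) - 1)) := by
      rw [chebAngle]
      field_simp

theorem one_div_two_mul_add_one_le_log_sub_log {n : ℕ} (hn : 1 ≤ n) :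
    1 / (2 * (n : ℝ) + 1) ≤ (log (2 * n + 1) - log (2 * n - 1)) / 2 := by
  have hn' : (1 : ℝ) ≤ n := by exact_mod_cast hn
  have hlo : (0 : ℝ) < 2 * n - 1 := by linarith
  have h := one_sub_inv_le_log_of_pos (div_pos (by positivity : (0 : ℝ) < 2 * n + 1) hlo)
  rw [log_div (by positivity) hlo.ne', inv_div] at h
  have : 1 - (2 * (n : ℝ) - 1) / (2 * n + 1) = 2 * (1 / (2 * n + 1)) := by
    field_simp
    ring
  linarith

theorem sum_Icc_one_div_two_mul_sub_one_le {m : ℕ} (hm : 1 ≤ m) :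
    ∑ k ∈ Icc 1 m, 1 / (2 * (k : ℝ) - 1) ≤ 1 + log (2 * m - 1) / 2 := by
  induction m, hm using Nat.le_induction with
  | base => norm_num
  | succ n hn ih =>
    rw [sum_Icc_succ_top (by omega)]
    have hstep := one_div_two_mul_add_one_le_log_sub_log hn
    push_cast
    rw [show 2 * ((n : ℝ) + 1) - 1 = 2 * n + 1 by ring]
    linarith

theorem four_div_pi_mul_le_three_mul_log {m : ℕ} (hm : 2 ≤ m) :
    4 / π * (1 + log (2 * m - 1) / 2) ≤ 3 * log m := by
  rw [div_mul_eq_mul_div, div_le_iff₀ pi_pos]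
  have hπ := pi_gt_d2
  rcases hm.eq_or_lt with rfl | hm3
  · have hlog3 : log 3 ≤ log 2 + 1 / 2 := by
      have h := log_le_sub_one_of_pos (by norm_num : (0 : ℝ) < 3 / 2)
      rw [log_div (by norm_num) (by norm_num)] at h
      linarith
    have hlog2 := log_two_gt_d9
    norm_num
    nlinarith
  · have hm3 : (3 : ℝ) ≤ m := by exact_mod_cast hm3
    have hlogm : 1 ≤ log m := by
      rw [le_log_iff_exp_le (by positivity)]
      linarith [exp_one_lt_d9]
    have hlog2m : log (2 * m - 1) ≤ log 2 + log m := by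
      rw [← log_mul two_ne_zero (by positivity)]
      exact log_le_log (by linarith) (by linarith)
    have hlog2 : log 2 ≤ 1 := by linarith [log_le_sub_one_of_pos (zero_lt_two' ℝ)]
    nlinarith

/-- The condition number `α(x) = ∑_{k=1}^m ∏_{j≠k} |x_j/(x_j - x_k)|` of Richardson
extrapolation with Chebyshev nodes satisfies `α(x) ≤ 3 log m` for `m ≥ 2`. -/
theorem chebNode_condition_number_le (m : ℕ) (hm : 2 ≤ m) :
    ∑ k ∈ Finset.Icc 1 m,
        ∏ j ∈ (Finset.Icc 1 m).erase k, |chebNode m j / (chebNode m j - chebNode m k)| ≤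
      3 * Real.log m := by
  calc ∑ k ∈ Icc 1 m, ∏ j ∈ (Icc 1 m).erase k, |chebNode m j / (chebNode m j - chebNode m k)|
      = ∑ k ∈ Icc 1 m, cos (chebAngle m k) / (m * sin (chebAngle m k)) :=
        sum_congr rfl fun k hk => prod_abs_chebNode_div_sub_chebNode hk
    _ ≤ ∑ k ∈ Icc 1 m, 4 / π * (1 / (2 * (k : ℝ) - 1)) :=
        sum_le_sum fun k hk => (cos_chebAngle_div_mul_sin_lt hk).le
    _ = 4 / π * ∑ k ∈ Icc 1 m, 1 / (2 * (k : ℝ) - 1) := (mul_sum _ _ _).symm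
    _ ≤ 4 / π * (1 + log (2 * m - 1) / 2) := by
        gcongr
        exact sum_Icc_one_div_two_mul_sub_one_le (by omega)
    _ ≤ 3 * log m := four_div_pi_mul_le_three_mul_log hm
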